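/- If H : G → ℝ is a homogeneous quasi-morphism with defect Δ(H) and g ∈ [G,G], then scl(g) ≥ |H(g)| / (2Δ(H)). -/

import Mathlib

open Filter Finset
open scoped commutatorElement

def IsQuasimorphism {G : Type*} [Group G] (H : G → ℝ) : Prop :=
  ∃ D : ℝ, ∀ x y : G, |H (x * y) - H x - H y| ≤ D

noncomputable def defect {G : Type*} [Group G] (H : G → ℝ) : ℝ :=
  sSup {d : ℝ | ∃ x y : G, d = |H (x * y) - H x - H y|}

def IsHomogeneousQM {G : Type*} [Group G] (H : G → ℝ) : Prop :=
  IsQuasimorphism H ∧ ∀ (g : G) (m : ℤ), H (g ^ m) = m * H g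

def IsProdCommutators {G : Type*} [Group G] (g : G) (n : ℕ) : Prop :=
  ∃ a b : Fin n → G, g = (List.ofFn fun i => ⁅a i, b i⁆).prod

noncomputable def cl {G : Type*} [Group G] (g : G) : ℕ :=
  sInf {n : ℕ | IsProdCommutators g n}

noncomputable def scl {G : Type*} [Group G] (g : G) : ℝ :=
  Filter.liminf (fun n : ℕ => (cl (g ^ n) : ℝ) / n) Filter.atTop

/-!
A homogeneous quasimorphism is conjugation invariant, so `H ⁅a, b⁆ = H (a b a⁻¹) + H b⁻¹` up to
one defect gives `|H ⁅a, b⁆| ≤ Δ`; each further factor of a product of commutators costs at most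
`2Δ`. Hence `n |H g| = |H (g ^ n)| ≤ 2 Δ cl (g ^ n)`, and dividing by `2 Δ n` and passing to the
liminf gives the bound; since `cl (g ^ n) / n ≤ cl g`, that liminf is of a bounded sequence and
not a junk value.
-/

open scoped Pointwise

section Quasimorphism

variable {G : Type*} [Group G] {H : G → ℝ}

theorem IsQuasimorphism.abs_sub_le_defect (hH : IsQuasimorphism H) (x y : G) :
    |H (x * y) - H x - H y| ≤ defect H := by
  obtain ⟨D, hD⟩ := hH
  exact le_csSup ⟨D, by rintro d ⟨a, b, rfl⟩; exact hD a b⟩ ⟨x, y, rfl⟩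

theorem IsQuasimorphism.defect_nonneg (hH : IsQuasimorphism H) : 0 ≤ defect H :=
  (abs_nonneg _).trans (hH.abs_sub_le_defect 1 1)

end Quasimorphism

namespace IsHomogeneousQM

variable {G : Type*} [Group G] {H : G → ℝ}

theorem map_one (hH : IsHomogeneousQM H) : H 1 = 0 := by
  simpa using hH.2 1 0

theorem map_inv (hH : IsHomogeneousQM H) (x : G) : H x⁻¹ = -H x := by
  simpa using hH.2 x (-1)

theorem map_pow (hH : IsHomogeneousQM H) (x : G) (n : ℕ) : H (x ^ n) = n * H x := by
  simpa using hH.2 x n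

theorem abs_map_conj_sub_le (hH : IsHomogeneousQM H) (x y : G) :
    |H (x * y * x⁻¹) - H y| ≤ 2 * defect H := by
  have h₁ := hH.1.abs_sub_le_defect x (y * x⁻¹)
  have h₂ := hH.1.abs_sub_le_defect y x⁻¹
  rw [← mul_assoc] at h₁
  rw [hH.map_inv] at h₂
  calc |H (x * y * x⁻¹) - H y|
      = |(H (x * y * x⁻¹) - H x - H (y * x⁻¹)) + (H (y * x⁻¹) - H y - -H x)| := by ring_nf
    _ ≤ defect H + defect H := (abs_add_le _ _).trans (add_le_add h₁ h₂)
    _ = 2 * defect H := by ring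

/-- The conjugation error is bounded, and homogeneity multiplies it by `n` when `y` is replaced
by `y ^ n`. -/
theorem map_conj (hH : IsHomogeneousQM H) (x y : G) : H (x * y * x⁻¹) = H y := by
  have hscaled (n : ℕ) : n * |H (x * y * x⁻¹) - H y| ≤ 2 * defect H := by
    have := hH.abs_map_conj_sub_le x (y ^ n)
    rwa [← conj_pow, hH.map_pow, hH.map_pow, ← mul_sub, abs_mul, Nat.abs_cast] at this
  by_contra hne
  have hpos : 0 < |H (x * y * x⁻¹) - H y| := abs_pos.mpr (sub_ne_zero.mpr hne)
  obtain ⟨n, hn⟩ := exists_nat_gt (2 * defect H / |H (x * y * x⁻¹) - H y|)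
  rw [div_lt_iff₀ hpos] at hn
  linarith [hscaled n]

theorem abs_map_commutatorElement_le (hH : IsHomogeneousQM H) (a b : G) :
    |H ⁅a, b⁆| ≤ defect H := by
  simpa [commutatorElement_def, hH.map_conj, hH.map_inv] using
    hH.1.abs_sub_le_defect (a * b * a⁻¹) b⁻¹

theorem abs_le_of_mem_pow (hH : IsHomogeneousQM H) {S : Set G} {B : ℝ}
    (hS : ∀ x ∈ S, |H x| ≤ B) {n : ℕ} {x : G} (hx : x ∈ S ^ n) :
    |H x| ≤ n * (B + defect H) := by
  induction n generalizing x with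
  | zero => simp_all [hH.map_one]
  | succ n ih =>
    obtain ⟨y, hy, s, hs, rfl⟩ := Set.mem_mul.mp (pow_succ S n ▸ hx)
    have hys := hH.1.abs_sub_le_defect y s
    calc |H (y * s)| = |(H (y * s) - H y - H s) + H y + H s| := by ring_nf
      _ ≤ |H (y * s) - H y - H s| + |H y| + |H s| := abs_add_three _ _ _
      _ ≤ (n + 1 : ℕ) * (B + defect H) := by
          push_cast; linarith [ih hy, hS s hs]

theorem abs_le_of_mem_commutatorSet_pow (hH : IsHomogeneousQM H) {n : ℕ} {x : G}
    (hx : x ∈ commutatorSet G ^ n) : |H x| ≤ 2 * n * defect H := by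
  have := hH.abs_le_of_mem_pow (B := defect H)
    (by rintro _ ⟨a, b, rfl⟩; exact hH.abs_map_commutatorElement_le a b) hx
  linarith

end IsHomogeneousQM

section CommutatorLength

variable {G : Type*} [Group G]

theorem isProdCommutators_iff_mem_pow {g : G} {n : ℕ} :
    IsProdCommutators g n ↔ g ∈ commutatorSet G ^ n := by
  rw [Set.mem_pow]
  constructor
  · rintro ⟨a, b, rfl⟩
    exact ⟨fun i ↦ ⟨⁅a i, b i⁆, a i, b i, rfl⟩, rfl⟩
  · rintro ⟨f, rfl⟩
    choose a b hab using fun i ↦ (f i).2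
    exact ⟨a, b, by simp only [hab]⟩

theorem commutatorSet_inv : (commutatorSet G)⁻¹ = commutatorSet G := by
  ext y
  constructor
  · rintro ⟨a, b, h⟩
    exact ⟨b, a, by rw [← commutatorElement_inv, h, inv_inv]⟩
  · rintro ⟨a, b, rfl⟩
    exact ⟨b, a, (commutatorElement_inv a b).symm⟩

theorem exists_mem_commutatorSet_pow {g : G} (hg : g ∈ commutator G) :
    ∃ n, g ∈ commutatorSet G ^ n := by
  rw [commutator_eq_closure] at hg
  induction hg using Subgroup.closure_induction with
  | mem x hx => exact ⟨1, by rwa [pow_one]⟩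
  | one => exact ⟨0, rfl⟩
  | mul x y _ _ hx hy =>
    obtain ⟨m, hx⟩ := hx
    obtain ⟨n, hy⟩ := hy
    exact ⟨m + n, pow_add (commutatorSet G) m n ▸ Set.mul_mem_mul hx hy⟩
  | inv x _ hx =>
    obtain ⟨n, hx⟩ := hx
    exact ⟨n, by rwa [← commutatorSet_inv, inv_pow, Set.inv_mem_inv]⟩

theorem mem_commutatorSet_pow_cl {g : G} (hg : g ∈ commutator G) :
    g ∈ commutatorSet G ^ cl g := by
  have hne : {n | IsProdCommutators g n}.Nonempty :=
    (exists_mem_commutatorSet_pow hg).imp fun _ ↦ isProdCommutators_iff_mem_pow.mpr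
  exact isProdCommutators_iff_mem_pow.mp (Nat.sInf_mem hne)

theorem cl_pow_le {g : G} (hg : g ∈ commutator G) (n : ℕ) : cl (g ^ n) ≤ n * cl g := by
  refine Nat.sInf_le (isProdCommutators_iff_mem_pow.mpr ?_)
  rw [mul_comm, pow_mul]
  exact Set.pow_mem_pow (mem_commutatorSet_pow_cl hg)

theorem cl_pow_div_le {g : G} (hg : g ∈ commutator G) (n : ℕ) :
    (cl (g ^ n) : ℝ) / n ≤ cl g := by
  rcases n.eq_zero_or_pos with rfl | hn
  · simp
  · rw [div_le_iff₀ (by positivity), mul_comm]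
    exact_mod_cast cl_pow_le hg n

theorem IsHomogeneousQM.abs_div_le_cl_pow_div {H : G → ℝ} (hH : IsHomogeneousQM H) {g : G}
    (hg : g ∈ commutator G) {n : ℕ} (hn : 0 < n) :
    |H g| / (2 * defect H) ≤ (cl (g ^ n) : ℝ) / n := by
  have hcl := hH.abs_le_of_mem_commutatorSet_pow (mem_commutatorSet_pow_cl (pow_mem hg n))
  rw [hH.map_pow, abs_mul, Nat.abs_cast] at hcl
  refine div_le_of_le_mul₀ (by linarith [hH.1.defect_nonneg]) (by positivity) ?_
  rw [div_mul_eq_mul_div, le_div_iff₀ (by exact_mod_cast hn)]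
  linarith

end CommutatorLength

theorem stmt4 {G : Type*} [Group G] (H : G → ℝ) (hH : IsHomogeneousQM H)
    (g : G) (hg : g ∈ commutator G) :
    |H g| / (2 * defect H) ≤ scl g :=
  le_liminf_of_le (isCoboundedUnder_ge_of_le atTop (cl_pow_div_le hg))
    (eventually_atTop.mpr ⟨1, fun _ hn ↦ hH.abs_div_le_cl_pow_div hg hn⟩)
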